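/- For each integer d with 0 ≤ d ≤ n there exists a nonzero polynomial p of degree at most d satisfying the functional equation x·p(x) + (n − x)·p(x+2) = (n − 2d)·p(x+1) identically; consequently the vector (p(1), p(2), ..., p(n+1)) is an eigenvector of the Kac matrix S_n with eigenvalue n − 2d. -/

import Mathlib

/-!
The operator `p ↦ X p + (n - X) p(X + 2) - (n - 2d) p(X + 1)` maps polynomials of degree `≤ d`
to polynomials of degree `< d`: the `X^(d+1)`-terms cancel for any eigenvalue, and the `X^d`-terms
cancel exactly for the eigenvalue `n - 2d`. By rank–nullity it kills a nonzero `p` of degree `≤ d`.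
Evaluating the functional equation at `x = 0, …, n` gives the eigenvector equations for
`(p(1), …, p(n+1))`, and this vector is nonzero because `p` has degree `≤ n`.
-/

open Polynomial

/-- The `(n+1) × (n+1)` Kac matrix: subdiagonal entries `1, 2, ..., n`,
superdiagonal entries `n, n-1, ..., 1`, and zeros elsewhere. -/
def kacMatrix (n : ℕ) : Matrix (Fin (n + 1)) (Fin (n + 1)) ℝ :=
  Matrix.of fun i j =>
    if (i : ℕ) = (j : ℕ) + 1 then (i : ℝ)
    else if (j : ℕ) = (i : ℕ) + 1 then (n : ℝ) + 1 - (j : ℝ)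
    else 0

namespace Polynomial

theorem coeff_taylor_of_natDegree_le_succ {R : Type*} [CommRing R] {p : R[X]} {k : ℕ}
    (hp : p.natDegree ≤ k + 1) (r : R) :
    (taylor r p).coeff k = p.coeff k + (k + 1) * r * p.coeff (k + 1) := by
  have hdeg : (hasseDeriv k p).natDegree ≤ 1 := (natDegree_hasseDeriv_le p k).trans (by omega)
  rw [taylor_coeff, eval_eq_sum_range' (n := 2) (by omega)]
  simp only [Finset.sum_range_succ, Finset.sum_range_zero, hasseDeriv_coeff, zero_add, pow_zero,
    pow_one, Nat.choose_self, Nat.add_comm 1 k, Nat.choose_succ_self_right]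
  push_cast
  ring

theorem exists_ne_zero_map_eq_zero_of_mapsTo_degreeLT {K : Type*} [Field K] {d : ℕ}
    (f : K[X] →ₗ[K] K[X]) (hf : ∀ p ∈ degreeLT K (d + 1), f p ∈ degreeLT K d) :
    ∃ p ∈ degreeLT K (d + 1), p ≠ 0 ∧ f p = 0 := by
  have hrank (k : ℕ) : Module.finrank K (degreeLT K k) = k := by
    simp [(degreeLTEquiv K k).finrank_eq]
  have : FiniteDimensional K (degreeLT K d) := (degreeLTEquiv K d).symm.finiteDimensional
  have : FiniteDimensional K (degreeLT K (d + 1)) :=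
    (degreeLTEquiv K (d + 1)).symm.finiteDimensional
  let g := (f.domRestrict (degreeLT K (d + 1))).codRestrict (degreeLT K d) fun p ↦ hf p p.2
  obtain ⟨p, hp, hp0⟩ := Submodule.exists_mem_ne_zero_of_ne_bot
    (LinearMap.ker_ne_bot_of_finrank_lt (f := g) (by simp [hrank]))
  exact ⟨p, p.2, by simpa using hp0, congrArg Subtype.val hp⟩

theorem eval_fin_succ_ne_zero {R : Type*} [CommRing R] [IsDomain R] [CharZero R] {p : R[X]}
    {n : ℕ} (hp : p ≠ 0) (hdeg : p.natDegree ≤ n) :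
    (fun i : Fin (n + 1) ↦ p.eval ((i : ℕ) + 1 : R)) ≠ 0 := by
  intro hzero
  refine hp (p.eq_zero_of_natDegree_lt_card_of_eval_eq_zero
    (f := fun i : Fin (n + 1) ↦ ((i : ℕ) + 1 : R)) (fun i j hij ↦ Fin.ext (by simpa using hij))
    (congrFun hzero) (by simpa using hdeg))

end Polynomial

section KacOperator

variable {R : Type*} [CommRing R]

noncomputable def kacOperator (m : R) (d : ℕ) : R[X] →ₗ[R] R[X] :=
  LinearMap.mulLeft R X + LinearMap.mulLeft R (C m - X) ∘ₗ taylor 2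
    - LinearMap.mulLeft R (C (m - 2 * d)) ∘ₗ taylor 1

theorem kacOperator_apply (m : R) (d : ℕ) (p : R[X]) :
    kacOperator m d p
      = X * p + (C m - X) * p.comp (X + C 2) - C (m - 2 * d) * p.comp (X + C 1) := by
  simp [kacOperator, taylor_apply]

theorem coeff_kacOperator_eq_zero {m : R} {d : ℕ} {p : R[X]} (hp : p.natDegree ≤ d) {j : ℕ}
    (hj : d ≤ j) : (kacOperator m d p).coeff j = 0 := by
  have hcoeff : p.coeff (j + 1) = 0 := coeff_eq_zero_of_natDegree_lt (by omega)
  have htaylor (r : R) : (taylor r p).coeff j = p.coeff j + (j + 1) * r * p.coeff (j + 1) :=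
    coeff_taylor_of_natDegree_le_succ (by omega) r
  rcases j with _ | j
  · obtain rfl : d = 0 := by omega
    simp only [kacOperator, LinearMap.sub_apply, LinearMap.add_apply, LinearMap.comp_apply,
      LinearMap.mulLeft_apply, coeff_sub, coeff_add, sub_mul, coeff_C_mul, coeff_X_mul_zero,
      htaylor, hcoeff]
    ring
  · have htaylor_pred (r : R) : (taylor r p).coeff j = p.coeff j + (j + 1) * r * p.coeff (j + 1) :=
      coeff_taylor_of_natDegree_le_succ (by omega) r
    -- the `X^(j+1)`-coefficient is `2 (d - (j + 1)) p_(j+1)`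
    have hdj : ((d : R) - (j + 1)) * p.coeff (j + 1) = 0 := by
      rcases hj.eq_or_lt with rfl | hlt
      · simp
      · simp [coeff_eq_zero_of_natDegree_lt (hp.trans_lt hlt)]
    simp only [kacOperator, LinearMap.sub_apply, LinearMap.add_apply, LinearMap.comp_apply,
      LinearMap.mulLeft_apply, coeff_sub, coeff_add, sub_mul, coeff_C_mul, coeff_X_mul, htaylor,
      htaylor_pred, hcoeff]
    push_cast
    linear_combination 2 * hdj

theorem kacOperator_mem_degreeLT {m : R} {d : ℕ} {p : R[X]} (hp : p ∈ degreeLT R (d + 1)) :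
    kacOperator m d p ∈ degreeLT R d := by
  rw [degreeLT_succ_eq_degreeLE, mem_degreeLE, ← natDegree_le_iff_degree_le] at hp
  exact mem_degreeLT.mpr <| (degree_lt_iff_coeff_zero _ _).mpr fun j hj ↦
    coeff_kacOperator_eq_zero hp (by exact_mod_cast hj)

end KacOperator

theorem kacMatrix_mulVec_apply (n : ℕ) (f : ℝ → ℝ) (i : Fin (n + 1)) :
    (kacMatrix n).mulVec (fun j : Fin (n + 1) ↦ f ((j : ℕ) + 1 : ℝ)) i
      = i * f i + (n - i) * f (i + 2) := by
  obtain ⟨i, hi⟩ := i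
  have hsplit (j : Fin (n + 1)) : kacMatrix n ⟨i, hi⟩ j
      = (if (j : ℕ) + 1 = i then (i : ℝ) else 0)
        + (if (j : ℕ) = i + 1 then (n : ℝ) + 1 - j else 0) := by
    simp only [kacMatrix, Matrix.of_apply]
    split_ifs <;> first | omega | ring
  simp only [Matrix.mulVec, dotProduct, hsplit, add_mul, Finset.sum_add_distrib, ite_mul, zero_mul]
  rw [Fin.sum_univ_eq_sum_range (fun j ↦ if j + 1 = i then (i : ℝ) * f (j + 1) else 0),
    Fin.sum_univ_eq_sum_range
      (fun j ↦ if j = i + 1 then ((n : ℝ) + 1 - j) * f (j + 1) else 0),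
    Finset.sum_ite_eq']
  congr 1
  · rcases i with _ | k
    · simp
    · simp [Finset.sum_ite_eq', show k < n + 1 by omega]
  · rcases (Nat.lt_succ_iff.mp hi).lt_or_eq with hlt | rfl
    · rw [if_pos (Finset.mem_range.mpr (by omega))]
      push_cast
      ring_nf
    · simp

theorem kacMatrix_mulVec_eq_smul {n : ℕ} {f : ℝ → ℝ} {μ : ℝ}
    (hf : ∀ i : ℕ, i ≤ n → i * f i + (n - i) * f (i + 2) = μ * f (i + 1)) :
    (kacMatrix n).mulVec (fun i : Fin (n + 1) ↦ f ((i : ℕ) + 1 : ℝ))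
      = μ • fun i : Fin (n + 1) ↦ f ((i : ℕ) + 1 : ℝ) :=
  funext fun i ↦ by rw [kacMatrix_mulVec_apply, hf i (by omega)]; rfl

theorem kac_eigenvector_from_polynomial (n : ℕ) (d : ℕ) (hd : d ≤ n) :
    ∃ p : ℝ[X], p ≠ 0 ∧ p.degree ≤ d ∧
      (X * p + (C (n : ℝ) - X) * p.comp (X + C 2)
          = C ((n : ℝ) - 2 * d) * p.comp (X + C 1)) ∧
      (fun i : Fin (n + 1) => p.eval ((i : ℕ) + 1 : ℝ)) ≠ 0 ∧
      (kacMatrix n).mulVec (fun i => p.eval ((i : ℕ) + 1 : ℝ))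
        = ((n : ℝ) - 2 * d) • fun i : Fin (n + 1) => p.eval ((i : ℕ) + 1 : ℝ) := by
  obtain ⟨p, hp_deg, hp0, hker⟩ :=
    exists_ne_zero_map_eq_zero_of_mapsTo_degreeLT (kacOperator (n : ℝ) d)
      fun _ ↦ kacOperator_mem_degreeLT
  rw [degreeLT_succ_eq_degreeLE, mem_degreeLE] at hp_deg
  have heqn : X * p + (C (n : ℝ) - X) * p.comp (X + C 2)
      = C ((n : ℝ) - 2 * d) * p.comp (X + C 1) := by
    rwa [kacOperator_apply, sub_eq_zero] at hker
  have heval (x : ℝ) : x * p.eval x + (n - x) * p.eval (x + 2) = (n - 2 * d) * p.eval (x + 1) := by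
    simpa [eval_comp] using congrArg (eval x) heqn
  exact ⟨p, hp0, hp_deg, heqn,
    eval_fin_succ_ne_zero hp0 ((natDegree_le_iff_degree_le.mpr hp_deg).trans hd),
    kacMatrix_mulVec_eq_smul (f := fun x ↦ p.eval x) fun i _ ↦ heval i⟩
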